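/- Let (P, 𝓛) be a thick polar space of rank at least 3, let H be a geometric hyperplane of (P, 𝓛), and let k ∈ P with k ∉ H. If θ : P → P is an automorphism of the geometry (a bijection such that a subset l ⊆ P is a line if and only if its image θ(l) is a line) which fixes every point of H and fixes k, then θ is the identity. Consequently, a collineation pointwise fixing a geometric hyperplane H is uniquely determined by the image of a single point outside H. -/

import Mathlib

/-- Two points of a point-line geometry `(P, 𝓛)` are collinear if some line contains both. -/
def GeomCollinear {P : Type*} (𝓛 : Set (Set P)) (p q : P) : Prop :=
  ∃ l ∈ 𝓛, p ∈ l ∧ q ∈ l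

/-- A subspace of a point-line geometry: every line containing at least two distinct points
of `S` is contained in `S`. -/
def IsGeomSubspace {P : Type*} (𝓛 : Set (Set P)) (S : Set P) : Prop :=
  ∀ l ∈ 𝓛, ∀ p ∈ l, ∀ q ∈ l, p ∈ S → q ∈ S → p ≠ q → l ⊆ S

/-- A geometric hyperplane: a subspace meeting every line. -/
def IsGeomHyperplane {P : Type*} (𝓛 : Set (Set P)) (H : Set P) : Prop :=
  IsGeomSubspace 𝓛 H ∧ ∀ l ∈ 𝓛, (l ∩ H).Nonempty

/-
Call `x` moved if `θ x ≠ x`. If `x ∉ H` and `x ⟂ θ x`, every line through `x` meets `H` in a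
fixed point collinear with both `x` and `θ x`, so `x^⊥ ⊆ (θ x)^⊥`, and in a nondegenerate polar
space this forces `θ x = x`. Hence a moved point is collinear with no fixed point outside `H`
(the line joining them would contain two fixed points and so be `θ`-stable); in particular
`k^⊥` is fixed pointwise. For moved `x` and `u ∈ x^⊥ ∩ H`, looking at the line `xu` from `k`,
and then at the line `uk` from a moved `y`, shows that `u` is collinear with `k` and with every
moved point; thickness then makes `u` collinear with all of `x^⊥ ∩ H`. So `x^⊥ ⊆ u^⊥`, whence
`x = u ∈ H`, which is absurd.
-/

theorem Set.exists_mem_ne_ne_of_three_le_encard {α : Type*} {s : Set α} (hs : 3 ≤ s.encard)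
    (a b : α) : ∃ c ∈ s, c ≠ a ∧ c ≠ b := by
  by_contra! h
  have hsub : s ⊆ {a, b} := fun c hc => (em (c = a)).elim Or.inl fun hca => Or.inr (h c hc hca)
  have hle : s.encard ≤ 2 := calc
    s.encard ≤ ({a, b} : Set α).encard := Set.encard_le_encard hsub
    _ ≤ ({b} : Set α).encard + 1 := Set.encard_insert_le _ _
    _ = 2 := by rw [Set.encard_singleton]; rfl
  exact absurd (hs.trans hle) (by decide)

/-- `x^⊥`. -/
def geomPerp {P : Type*} (𝓛 : Set (Set P)) (x : P) : Set P :=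
  {y | GeomCollinear 𝓛 x y}

def BuekenhoutShult {P : Type*} (𝓛 : Set (Set P)) : Prop :=
  ∀ p : P, ∀ l ∈ 𝓛, p ∉ l →
    (∃! q : P, q ∈ l ∧ GeomCollinear 𝓛 p q) ∨ (∀ q ∈ l, GeomCollinear 𝓛 p q)

/-- A nondegenerate polar space (not necessarily thick). -/
structure IsPolarSpace {P : Type*} (𝓛 : Set (Set P)) : Prop where
  line_eq_of_mem : ∀ p q : P, p ≠ q → ∀ l₁ ∈ 𝓛, ∀ l₂ ∈ 𝓛,
    p ∈ l₁ → q ∈ l₁ → p ∈ l₂ → q ∈ l₂ → l₁ = l₂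
  exists_line : ∀ p : P, ∃ l ∈ 𝓛, p ∈ l
  buekenhoutShult : BuekenhoutShult 𝓛
  exists_not_collinear : ∀ p : P, ∃ q : P, ¬ GeomCollinear 𝓛 p q

section PointLineGeometry

variable {P : Type*} {𝓛 : Set (Set P)}

local notation:50 p " ⟂ " q => GeomCollinear 𝓛 p q

theorem GeomCollinear.symm {p q : P} (h : p ⟂ q) : q ⟂ p :=
  let ⟨l, hl, hp, hq⟩ := h
  ⟨l, hl, hq, hp⟩

theorem GeomCollinear.refl (hline : ∀ p : P, ∃ l ∈ 𝓛, p ∈ l) (p : P) : p ⟂ p :=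
  let ⟨l, hl, hp⟩ := hline p
  ⟨l, hl, hp, hp⟩

theorem GeomCollinear.image {θ : P → P} (hθ : ∀ l ∈ 𝓛, θ '' l ∈ 𝓛) {p q : P} (h : p ⟂ q) :
    θ p ⟂ θ q :=
  let ⟨l, hl, hp, hq⟩ := h
  ⟨θ '' l, hθ l hl, Set.mem_image_of_mem θ hp, Set.mem_image_of_mem θ hq⟩

theorem IsGeomSubspace.eq_of_mem_line {S l : Set P} {x u v : P} (hS : IsGeomSubspace 𝓛 S)
    (hl : l ∈ 𝓛) (hx : x ∈ l) (hxS : x ∉ S) (hu : u ∈ l) (huS : u ∈ S) (hv : v ∈ l)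
    (hvS : v ∈ S) : u = v := by
  by_contra huv
  exact hxS (hS l hl u hu v hv huS hvS huv hx)

namespace BuekenhoutShult

variable (hBS : BuekenhoutShult 𝓛)
include hBS

theorem collinear_of_two_collinear {l : Set P} (hl : l ∈ 𝓛) {p q₁ q₂ q : P} (hq₁ : q₁ ∈ l)
    (hq₂ : q₂ ∈ l) (hne : q₁ ≠ q₂) (h₁ : p ⟂ q₁) (h₂ : p ⟂ q₂) (hq : q ∈ l) : p ⟂ q := by
  by_cases hp : p ∈ l
  · exact ⟨l, hl, hp, hq⟩
  rcases hBS p l hl hp with ⟨r, -, hr⟩ | hall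
  · exact absurd ((hr q₁ ⟨hq₁, h₁⟩).trans (hr q₂ ⟨hq₂, h₂⟩).symm) hne
  · exact hall q hq

theorem exists_collinear {l : Set P} (hl : l ∈ 𝓛) (hne : l.Nonempty) (p : P) :
    ∃ q ∈ l, p ⟂ q := by
  obtain ⟨q₀, hq₀⟩ := hne
  by_cases hp : p ∈ l
  · exact ⟨p, hp, l, hl, hp, hp⟩
  rcases hBS p l hl hp with ⟨q, ⟨hq, hpq⟩, -⟩ | hall
  · exact ⟨q, hq, hpq⟩
  · exact ⟨q₀, hq₀, hall q₀ hq₀⟩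

theorem geomPerp_subset_of_not_collinear {x a m : P} (hxa : geomPerp 𝓛 x ⊆ geomPerp 𝓛 a)
    (hxm : ¬ x ⟂ m) (ham : a ⟂ m) : geomPerp 𝓛 m ⊆ geomPerp 𝓛 a := by
  rintro z ⟨W, hW, hmW, hzW⟩
  obtain ⟨w, hwW, hxw⟩ := hBS.exists_collinear hW ⟨m, hmW⟩ x
  have hwm : w ≠ m := by rintro rfl; exact hxm hxw
  exact hBS.collinear_of_two_collinear hW hmW hwW hwm.symm ham (hxa hxw) hzW

theorem geomPerp_eq_univ_of_geomPerp_subset (hline : ∀ p : P, ∃ l ∈ 𝓛, p ∈ l) {x a z : P}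
    (hxa : geomPerp 𝓛 x ⊆ geomPerp 𝓛 a) (hxz : ¬ x ⟂ z) (haz : a ⟂ z) :
    geomPerp 𝓛 a = Set.univ := by
  obtain ⟨M, hM, haM, hzM⟩ := haz
  have hxa' : x ⟂ a := (hxa (GeomCollinear.refl hline x)).symm
  refine Set.eq_univ_of_forall fun y => ?_
  obtain ⟨m, hmM, hym⟩ := hBS.exists_collinear hM ⟨a, haM⟩ y
  by_cases hma : m = a
  · exact hma ▸ hym.symm
  have hxm : ¬ x ⟂ m := fun hxm =>
    hxz (hBS.collinear_of_two_collinear hM haM hmM (Ne.symm hma) hxa' hxm hzM)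
  exact hBS.geomPerp_subset_of_not_collinear hxa hxm ⟨M, hM, haM, hmM⟩ hym.symm

theorem eq_of_geomPerp_subset (hline : ∀ p : P, ∃ l ∈ 𝓛, p ∈ l)
    (hnd : ∀ p : P, ∃ q : P, ¬ p ⟂ q) {x y : P} (hxy : geomPerp 𝓛 x ⊆ geomPerp 𝓛 y) :
    x = y := by
  by_contra hne
  obtain ⟨L, hL, hyL, hxL⟩ := hxy (GeomCollinear.refl hline x)
  obtain ⟨z, hxz⟩ := hnd x
  obtain ⟨a, haL, hza⟩ := hBS.exists_collinear hL ⟨x, hxL⟩ z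
  have hxa : geomPerp 𝓛 x ⊆ geomPerp 𝓛 a := fun w hxw =>
    (hBS.collinear_of_two_collinear hL hxL hyL hne hxw.symm (hxy hxw).symm haL).symm
  obtain ⟨b, hab⟩ := hnd a
  have hPa := hBS.geomPerp_eq_univ_of_geomPerp_subset hline hxa hxz hza.symm
  exact hab (hPa.symm ▸ Set.mem_univ b : b ∈ geomPerp 𝓛 a)

end BuekenhoutShult

end PointLineGeometry

section Collineation

variable {P : Type*} {𝓛 : Set (Set P)} {H : Set P} {θ : P → P}

local notation:50 p " ⟂ " q => GeomCollinear 𝓛 p q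

theorem geomPerp_subset_geomPerp_apply (hBS : BuekenhoutShult 𝓛)
    (hmeet : ∀ l ∈ 𝓛, (l ∩ H).Nonempty) (hθ : ∀ l ∈ 𝓛, θ '' l ∈ 𝓛) (hfix : ∀ p ∈ H, θ p = p)
    {x : P} (hxH : x ∉ H) (hx : x ⟂ θ x) : geomPerp 𝓛 x ⊆ geomPerp 𝓛 (θ x) := by
  rintro w ⟨m, hm, hxm, hwm⟩
  obtain ⟨u, hum, huH⟩ := hmeet m hm
  have hux : u ≠ x := fun h => hxH (h ▸ huH)
  have hθxu : θ x ⟂ u := by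
    have := GeomCollinear.image hθ ⟨m, hm, hum, hxm⟩
    rw [hfix u huH] at this
    exact this.symm
  exact hBS.collinear_of_two_collinear hm hum hxm hux hθxu hx.symm hwm

variable (hP : IsPolarSpace 𝓛) (hH : IsGeomHyperplane 𝓛 H)
  (hθ : ∀ l ∈ 𝓛, θ '' l ∈ 𝓛) (hfix : ∀ p ∈ H, θ p = p)
include hP hH hθ hfix

theorem mem_of_apply_ne_of_collinear_of_apply_eq {x f : P} (hx : θ x ≠ x) (hf : θ f = f)
    (hxf : x ⟂ f) : f ∈ H := by
  by_contra hfH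
  obtain ⟨l, hl, hxl, hfl⟩ := hxf
  obtain ⟨u, hul, huH⟩ := hH.2 l hl
  have huf : u ≠ f := fun h => hfH (h ▸ huH)
  have hl_inv : θ '' l = l :=
    hP.line_eq_of_mem u f huf _ (hθ l hl) l hl ⟨u, hul, hfix u huH⟩ ⟨f, hfl, hf⟩ hul hfl
  have hxθx : x ⟂ θ x := ⟨l, hl, hxl, hl_inv ▸ Set.mem_image_of_mem θ hxl⟩
  have hxH : x ∉ H := fun h => hx (hfix x h)
  exact hx (hP.buekenhoutShult.eq_of_geomPerp_subset hP.exists_line hP.exists_not_collinear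
    (geomPerp_subset_geomPerp_apply hP.buekenhoutShult hH.2 hθ hfix hxH hxθx)).symm

variable {k : P} (hk : k ∉ H) (hθk : θ k = k)
include hk hθk

theorem apply_eq_of_collinear {p : P} (hpk : p ⟂ k) : θ p = p := by
  by_contra hp
  exact hk (mem_of_apply_ne_of_collinear_of_apply_eq hP hH hθ hfix hp hθk hpk)

theorem collinear_of_mem_of_apply_ne {x u : P} (hx : θ x ≠ x) (huH : u ∈ H) (hxu : x ⟂ u) :
    u ⟂ k := by
  obtain ⟨m, hm, hxm, hum⟩ := hxu
  obtain ⟨s, hsm, hks⟩ := hP.buekenhoutShult.exists_collinear hm ⟨x, hxm⟩ k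
  have hsH : s ∈ H := mem_of_apply_ne_of_collinear_of_apply_eq hP hH hθ hfix hx
    (apply_eq_of_collinear hP hH hθ hfix hk hθk hks.symm) ⟨m, hm, hxm, hsm⟩
  have hsu : s = u := hH.1.eq_of_mem_line hm hxm (fun h => hx (hfix x h)) hsm hsH hum huH
  exact hsu ▸ hks.symm

theorem collinear_of_apply_ne_of_apply_ne {x u y : P} (hx : θ x ≠ x) (huH : u ∈ H)
    (hxu : x ⟂ u) (hy : θ y ≠ y) : y ⟂ u := by
  obtain ⟨n, hn, hun, hkn⟩ := collinear_of_mem_of_apply_ne hP hH hθ hfix hk hθk hx huH hxu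
  obtain ⟨t, htn, hyt⟩ := hP.buekenhoutShult.exists_collinear hn ⟨u, hun⟩ y
  have htH : t ∈ H := mem_of_apply_ne_of_collinear_of_apply_eq hP hH hθ hfix hy
    (apply_eq_of_collinear hP hH hθ hfix hk hθk ⟨n, hn, htn, hkn⟩) hyt
  exact hH.1.eq_of_mem_line hn hkn hk htn htH hun huH ▸ hyt

theorem collinear_of_mem_of_mem (hthick : ∀ l ∈ 𝓛, 3 ≤ l.encard) {x u v : P} (hx : θ x ≠ x)
    (huH : u ∈ H) (hvH : v ∈ H) (hxu : x ⟂ u) (hxv : x ⟂ v) : v ⟂ u := by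
  obtain ⟨m, hm, hxm, hum⟩ := hxu
  obtain ⟨w, hwm, hwu, hwx⟩ := Set.exists_mem_ne_ne_of_three_le_encard (hthick m hm) u x
  have hwH : w ∉ H := fun h =>
    hwu (hH.1.eq_of_mem_line hm hxm (fun h => hx (hfix x h)) hwm h hum huH)
  have hw : θ w ≠ w := fun h =>
    hwH (mem_of_apply_ne_of_collinear_of_apply_eq hP hH hθ hfix hx h ⟨m, hm, hxm, hwm⟩)
  have hvw : v ⟂ w := (collinear_of_apply_ne_of_apply_ne hP hH hθ hfix hk hθk hx hvH hxv hw).symm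
  exact hP.buekenhoutShult.collinear_of_two_collinear hm hxm hwm (Ne.symm hwx) hxv.symm hvw hum

theorem geomPerp_subset_of_apply_ne (hthick : ∀ l ∈ 𝓛, 3 ≤ l.encard) {x u : P}
    (hx : θ x ≠ x) (huH : u ∈ H) (hxu : x ⟂ u) : geomPerp 𝓛 x ⊆ geomPerp 𝓛 u := by
  intro z hxz
  by_cases hz : θ z = z
  · exact collinear_of_mem_of_mem hP hH hθ hfix hk hθk hthick hx
      (mem_of_apply_ne_of_collinear_of_apply_eq hP hH hθ hfix hx hz hxz) huH hxz hxu
  · exact (collinear_of_apply_ne_of_apply_ne hP hH hθ hfix hk hθk hx huH hxu hz).symm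

end Collineation

theorem collineation_fixing_hyperplane_and_outside_point_is_id_general
    {P : Type*} (𝓛 : Set (Set P))
    -- thick polar space of rank at least 3: axioms
    (hline3 : ∀ l ∈ 𝓛, 3 ≤ l.encard)
    (hunique : ∀ p q : P, p ≠ q → ∀ l₁ ∈ 𝓛, ∀ l₂ ∈ 𝓛,
      p ∈ l₁ → q ∈ l₁ → p ∈ l₂ → q ∈ l₂ → l₁ = l₂)
    (hpointline : ∀ p : P, ∃ l ∈ 𝓛, p ∈ l)
    (hBS : ∀ p : P, ∀ l ∈ 𝓛, p ∉ l →
      (∃! q : P, q ∈ l ∧ GeomCollinear 𝓛 p q) ∨ (∀ q ∈ l, GeomCollinear 𝓛 p q))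
    (hnondeg : ∀ p : P, ∃ q : P, ¬ GeomCollinear 𝓛 p q)
    (H : Set P) (hH : IsGeomHyperplane 𝓛 H)
    (k : P) (hk : k ∉ H)
    (θ : Equiv.Perm P)
    (hlines : ∀ l : Set P, l ∈ 𝓛 ↔ (θ '' l) ∈ 𝓛)
    (hfixH : ∀ p ∈ H, θ p = p)
    (hfixk : θ k = k) :
    ∀ p : P, θ p = p := by
  have hP : IsPolarSpace 𝓛 := ⟨hunique, hpointline, hBS, hnondeg⟩
  have hθ : ∀ l ∈ 𝓛, θ '' l ∈ 𝓛 := fun l hl => (hlines l).1 hl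
  intro p
  by_contra hp
  obtain ⟨m, hm, hpm⟩ := hpointline p
  obtain ⟨u, hum, huH⟩ := hH.2 m hm
  have hpu : p = u := hP.buekenhoutShult.eq_of_geomPerp_subset hpointline hnondeg
    (geomPerp_subset_of_apply_ne hP hH hθ hfixH hk hfixk hline3 hp huH ⟨m, hm, hpm, hum⟩)
  exact hp (hfixH p (hpu ▸ huH))

/-- In a thick polar space of rank at least `3`, an automorphism that fixes
a geometric hyperplane `H` pointwise as well as one point `k ∉ H` is the identity; hence a
collineation pointwise fixing a geometric hyperplane is determined by the image of a single
point outside it. -/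
theorem collineation_fixing_hyperplane_and_outside_point_is_id
    {P : Type*} (𝓛 : Set (Set P))
    -- thick polar space of rank at least 3: axioms
    (hline3 : ∀ l ∈ 𝓛, 3 ≤ l.encard)
    (hunique : ∀ p q : P, p ≠ q → ∀ l₁ ∈ 𝓛, ∀ l₂ ∈ 𝓛,
      p ∈ l₁ → q ∈ l₁ → p ∈ l₂ → q ∈ l₂ → l₁ = l₂)
    (hpointline : ∀ p : P, ∃ l ∈ 𝓛, p ∈ l)
    (hBS : ∀ p : P, ∀ l ∈ 𝓛, p ∉ l →
      (∃! q : P, q ∈ l ∧ GeomCollinear 𝓛 p q) ∨ (∀ q ∈ l, GeomCollinear 𝓛 p q))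
    (hnondeg : ∀ p : P, ∃ q : P, ¬ GeomCollinear 𝓛 p q)
    (hrank3 : ∀ l ∈ 𝓛, ∃ p : P, p ∉ l ∧ ∀ q ∈ l, GeomCollinear 𝓛 p q)
    (H : Set P) (hH : IsGeomHyperplane 𝓛 H)
    (k : P) (hk : k ∉ H)
    (θ : Equiv.Perm P)
    (hlines : ∀ l : Set P, l ∈ 𝓛 ↔ (θ '' l) ∈ 𝓛)
    (hfixH : ∀ p ∈ H, θ p = p)
    (hfixk : θ k = k) :
    ∀ p : P, θ p = p :=
  collineation_fixing_hyperplane_and_outside_point_is_id_general 𝓛 hline3 hunique hpointline hBS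
    hnondeg H hH k hk θ hlines hfixH hfixk
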